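/- With the above hypotheses, for α ∈ R, x ∈ g_α, y ∈ g_{-α}, and j ∈ ℤ: (i) [π_j(x), π_{-j}(y)] = (1/m) π([x̄_j, y]); (ii) (π_j(x), π_{-j}(y)) = (1/m)(x̄_j, y). -/

import Mathlib

/-! Since `σ (π_j x) = ζ^j π_j x`, pairing `π_j x` with `σ^b y` under a `σ`-equivariant bilinear
map `Φ` (the bracket, or the form) gives `ζ^{-jb}` times the `σ^b`-translate of `Φ(π_j x, y)`;
averaging over `b` gives `Φ(π_j x, π_{-j} y) = π(Φ(π_j x, y))`. Expanding `π_j x` there, every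
term `σ^a x` with `ℓ ∤ a` drops out, and what remains is `(1/m) x̄_j`. For the form this is because
the weights `α ∘ σ^{-a}` of `σ^a x` and `-α` of `y` do not add up to zero on `T`. For the bracket,
`[σ^a x, y]` has a weight `β` vanishing on `T^σ` but not on `T`; the average `w` of its
`σ`-translates is `σ`-fixed and centralised by `T^σ`, hence by `T` (A4), while for a generic
`t ∈ T` it is a sum of `ad t`-eigenvectors with nonzero eigenvalues, so `w = 0`. -/

open Finset

section IARADefs

variable (F L : Type*) [Field F] [LieRing L] [LieAlgebra F L]

/-- The root space of a toral subalgebra `T` attached to a linear functional `α`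
(viewed as a functional on `L`; only its values on `T` matter). -/
def gSpace (T : LieSubalgebra F L) (α : L →ₗ[F] F) : Submodule F L where
  carrier := {x | ∀ t ∈ T, ⁅t, x⁆ = α t • x}
  add_mem' := by
    intro a b ha hb t ht
    rw [lie_add, ha t ht, hb t ht, smul_add]
  zero_mem' := by intro t ht; simp
  smul_mem' := by
    intro c x hx t ht
    rw [lie_smul, hx t ht, smul_comm]

/-- `(g, T)` is a toral pair with root system (a set of representatives) `R`. -/
structure IsToralPair (T : LieSubalgebra F L) (R : Set (L →ₗ[F] F)) : Prop where
  root_ne : ∀ α ∈ R, gSpace F L T α ≠ ⊥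
  decomp : (⨆ α ∈ R, gSpace F L T α) = ⊤
  complete : ∀ β : L →ₗ[F] F, gSpace F L T β ≠ ⊥ → ∃ α ∈ R, ∀ t ∈ T, α t = β t

/-- (IA1): `B` is an invariant nondegenerate symmetric bilinear form on `g`
whose restriction to `T` is nondegenerate. -/
structure IsInvForm (B : LinearMap.BilinForm F L) (T : LieSubalgebra F L) : Prop where
  symm : ∀ x y : L, B x y = B y x
  inv : ∀ x y z : L, B ⁅x, y⁆ z = B x ⁅y, z⁆
  nondeg : ∀ x : L, (∀ y : L, B x y = 0) → x = 0
  nondegT : ∀ t ∈ T, (∀ s ∈ T, B t s = 0) → t = 0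

/-- (IA2). -/
def IA2 (T : LieSubalgebra F L) (R : Set (L →ₗ[F] F)) : Prop :=
  ∀ α ∈ R, (∃ t ∈ T, α t ≠ 0) →
    ∃ e ∈ gSpace F L T α, ∃ f ∈ gSpace F L T (-α), ⁅e, f⁆ ≠ 0 ∧ ⁅e, f⁆ ∈ T

/-- (IA2)′ (division condition). -/
def IA2' (T : LieSubalgebra F L) (R : Set (L →ₗ[F] F)) : Prop :=
  ∀ α ∈ R, (∃ t ∈ T, α t ≠ 0) → ∀ e ∈ gSpace F L T α, e ≠ 0 →
    ∃ f ∈ gSpace F L T (-α), ⁅e, f⁆ ≠ 0 ∧ ⁅e, f⁆ ∈ T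

/-- (IA3): for nonisotropic roots `α` (i.e. `(α,α) = B t_α t_α ≠ 0` for a
representative `t_α ∈ T` of `α`), `ad x` is locally nilpotent for `x ∈ g_α`. -/
def IA3 (B : LinearMap.BilinForm F L) (T : LieSubalgebra F L)
    (R : Set (L →ₗ[F] F)) : Prop :=
  ∀ α ∈ R, ∀ tα ∈ T, (∀ t ∈ T, α t = B tα t) → B tα tα ≠ 0 →
    ∀ x ∈ gSpace F L T α, ∀ y : L, ∃ n : ℕ, ((LieAlgebra.ad F L x) ^ n) y = 0

/-- An invariant affine reflection algebra. -/
structure IsIARA (B : LinearMap.BilinForm F L) (T : LieSubalgebra F L)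
    (R : Set (L →ₗ[F] F)) : Prop where
  nonzero : ∃ x : L, x ≠ 0
  toral : IsToralPair F L T R
  ia1 : IsInvForm F L B T
  ia2 : IA2 F L T R
  ia3 : IA3 F L B T R

/-- A division invariant affine reflection algebra. -/
structure IsDivIARA (B : LinearMap.BilinForm F L) (T : LieSubalgebra F L)
    (R : Set (L →ₗ[F] F)) : Prop where
  nonzero : ∃ x : L, x ≠ 0
  toral : IsToralPair F L T R
  ia1 : IsInvForm F L B T
  ia2' : IA2' F L T R
  ia3 : IA3 F L B T R

variable {F L}

/-- (A4): the centralizer of `T⁰` in `g⁰` is contained in `g₀`. -/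
def A4Cond (T : LieSubalgebra F L) (σ : L ≃ₗ[F] L) : Prop :=
  ∀ x : L, σ x = x → (∀ t ∈ T, σ t = t → ⁅t, x⁆ = 0) → ∀ t ∈ T, ⁅t, x⁆ = 0

/-- The projection `π = (1/m) ∑ σ^i` of `g` onto the fixed points of `σ`. -/
noncomputable def piL (σ : L ≃ₗ[F] L) (m : ℕ) : L →ₗ[F] L :=
  (m : F)⁻¹ • ∑ i ∈ Finset.range m, ((σ ^ i : L ≃ₗ[F] L) : L →ₗ[F] L)

/-- The induced projection on functionals: `π(α) = (1/m) ∑ σ^i(α)`,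
`σ(α) = α ∘ σ⁻¹`. -/
noncomputable def piF (σ : L ≃ₗ[F] L) (m : ℕ) (α : L →ₗ[F] F) : L →ₗ[F] F :=
  (m : F)⁻¹ • ∑ i ∈ Finset.range m, α ∘ₗ ((σ⁻¹ ^ i : L ≃ₗ[F] L) : L →ₗ[F] L)

/-- The projection `π_j = (1/m) ∑ ζ^{-ji} σ^i` onto the `ζ^j`-eigenspace. -/
noncomputable def piJ (σ : L ≃ₗ[F] L) (m : ℕ) (ζ : F) (j : ℤ) : L →ₗ[F] L :=
  (m : F)⁻¹ • ∑ i ∈ Finset.range m,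
    ζ ^ (-(j * (i : ℤ))) • ((σ ^ i : L ≃ₗ[F] L) : L →ₗ[F] L)

/-- `x̄_j = ∑_{i=0}^{m/ℓ-1} ζ^{-jiℓ} σ^{iℓ}(x)`. -/
noncomputable def xbar (σ : L ≃ₗ[F] L) (m ℓ : ℕ) (ζ : F) (j : ℤ) (x : L) : L :=
  ∑ i ∈ Finset.range (m / ℓ), ζ ^ (-(j * (i : ℤ) * (ℓ : ℤ))) • ((σ ^ (i * ℓ)) x)

/-- Indecomposability of a set of roots with respect to a pairing `p`. -/
def Indecomposable {α : Type*} (p : α → α → F) (R : Set α) : Prop :=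
  ¬ ∃ R₁ R₂ : Set α, R₁.Nonempty ∧ R₂.Nonempty ∧ R₁ ∩ R₂ = ∅ ∧
      R₁ ∪ R₂ = {x ∈ R | p x x ≠ 0} ∧ ∀ x ∈ R₁, ∀ y ∈ R₂, p x y = 0

end IARADefs

theorem Finset.sum_range_rotate {M : Type*} [AddCommMonoid M] {m : ℕ} {f : ℕ → M}
    (h : f m = f 0) : ∑ i ∈ range m, f (i + 1) = ∑ i ∈ range m, f i := by
  cases m with
  | zero => rfl
  | succ k => rw [sum_range_succ, h, ← sum_range_succ']

theorem Finset.sum_range_filter_dvd {M : Type*} [AddCommMonoid M] {ℓ m : ℕ} (hℓ : 0 < ℓ)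
    (hℓm : ℓ ∣ m) (f : ℕ → M) :
    ∑ a ∈ range m with ℓ ∣ a, f a = ∑ i ∈ range (m / ℓ), f (i * ℓ) := by
  obtain ⟨k, rfl⟩ := hℓm
  rw [Nat.mul_div_cancel_left k hℓ]
  refine sum_nbij' (· / ℓ) (· * ℓ) ?_ ?_ ?_ ?_ ?_
  · intro a ha
    simp only [mem_filter, mem_range] at ha ⊢
    obtain ⟨ha, c, rfl⟩ := ha
    rw [Nat.mul_div_cancel_left c hℓ]
    exact lt_of_mul_lt_mul_left ha hℓ.le
  · intro i hi
    simp only [mem_filter, mem_range] at hi ⊢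
    exact ⟨by nlinarith, dvd_mul_left ℓ i⟩
  · intro a ha
    simp only [mem_filter] at ha
    exact Nat.div_mul_cancel ha.2
  · intro i _
    exact Nat.mul_div_cancel i hℓ
  · intro a ha
    simp only [mem_filter] at ha
    rw [Nat.div_mul_cancel ha.2]

theorem Module.End.sum_eq_zero_of_apply_sum_eq_zero {K V ι : Type*} [Field K] [AddCommGroup V]
    [Module K V] (f : Module.End K V) {s : Finset ι} {u : ι → V} {c : ι → K}
    (hc : ∀ i ∈ s, c i ≠ 0) (hu : ∀ i ∈ s, f (u i) = c i • u i) (h : f (∑ i ∈ s, u i) = 0) :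
    ∑ i ∈ s, u i = 0 := by
  refine Submodule.disjoint_def.mp (f.eigenspaces_iSupIndep 0) _ ?_ ?_
  · rw [Module.End.mem_eigenspace_iff, h, zero_smul]
  · exact Submodule.sum_mem _ fun i hi => Submodule.mem_iSup_of_mem (c i)
      (Submodule.mem_iSup_of_mem (hc i hi) (Module.End.mem_eigenspace_iff.mpr (hu i hi)))

theorem Module.Dual.exists_forall_apply_ne_zero {K V ι : Type*} [Field K] [Infinite K]
    [AddCommGroup V] [Module K V] [Finite ι] {f : ι → Module.Dual K V} (hf : ∀ i, f i ≠ 0) :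
    ∃ v, ∀ i, f i v ≠ 0 := by
  by_contra! h
  obtain ⟨i, hi⟩ := Subspace.exists_eq_top_of_iUnion_eq_univ (p := fun i => LinearMap.ker (f i))
    (Set.eq_univ_of_forall fun v => Set.mem_iUnion.mpr (h v))
  exact hf i (LinearMap.ker_eq_top.mp hi)

section Projections

variable {F L : Type*} [Field F] [LieRing L] [LieAlgebra F L]
  (σ : L ≃ₗ[F] L) (m : ℕ) (ζ : F)

theorem piJ_apply (j : ℤ) (u : L) :
    piJ σ m ζ j u = (m : F)⁻¹ • ∑ i ∈ range m, ζ ^ (-(j * i)) • (σ ^ i) u := by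
  simp [piJ]

theorem piL_apply (u : L) : piL σ m u = (m : F)⁻¹ • ∑ i ∈ range m, (σ ^ i) u := by
  simp [piL]

variable {σ m ζ}

theorem apply_piJ (hm : m ≠ 0) (hσm : σ ^ m = 1) (hζ : ζ ^ m = 1) (j : ℤ) (u : L) :
    σ (piJ σ m ζ j u) = ζ ^ j • piJ σ m ζ j u := by
  have hζ0 : ζ ≠ 0 := ne_zero_pow hm (hζ ▸ one_ne_zero)
  set f : ℕ → L := fun i => ζ ^ (-(j * i)) • (σ ^ i) u
  have hf : f m = f 0 := by
    simp only [f, hσm, Nat.cast_zero, mul_zero, neg_zero, zpow_zero, one_smul, pow_zero]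
    rw [show -(j * (m : ℤ)) = m * (-j) by ring, zpow_mul, zpow_natCast, hζ, one_zpow, one_smul]
  have hshift : ∀ i : ℕ, σ (f i) = ζ ^ j • f (i + 1) := by
    intro i
    simp only [f, map_smul, smul_smul, ← LinearEquiv.mul_apply, ← pow_succ']
    congr 1
    rw [← zpow_add₀ hζ0]
    congr 1
    push_cast
    ring
  rw [piJ_apply, map_smul, map_sum]
  change (m : F)⁻¹ • ∑ i ∈ range m, σ (f i) = ζ ^ j • (m : F)⁻¹ • ∑ i ∈ range m, f i
  rw [sum_congr rfl fun i _ => hshift i, ← smul_sum, sum_range_rotate hf, smul_comm]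

theorem pow_apply_piJ (hm : m ≠ 0) (hσm : σ ^ m = 1) (hζ : ζ ^ m = 1) (j : ℤ) (u : L)
    (b : ℕ) : (σ ^ b) (piJ σ m ζ j u) = (ζ ^ j) ^ b • piJ σ m ζ j u := by
  induction b with
  | zero => simp
  | succ b ih => rw [pow_succ', LinearEquiv.mul_apply, ih, map_smul, apply_piJ hm hσm hζ,
      smul_smul, pow_succ]

theorem map_pow_apply_pow_apply {N : Type*} [AddCommGroup N] [Module F N]
    (Φ : L →ₗ[F] L →ₗ[F] N) (τ : N ≃ₗ[F] N) (hΦ : ∀ u v, Φ (σ u) (σ v) = τ (Φ u v))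
    (b : ℕ) (u v : L) : Φ ((σ ^ b) u) ((σ ^ b) v) = (τ ^ b) (Φ u v) := by
  induction b with
  | zero => rfl
  | succ b ih => rw [pow_succ', pow_succ', LinearEquiv.mul_apply, LinearEquiv.mul_apply, hΦ, ih,
      LinearEquiv.mul_apply]

theorem map_piJ_piJ_neg {N : Type*} [AddCommGroup N] [Module F N]
    (Φ : L →ₗ[F] L →ₗ[F] N) (τ : N ≃ₗ[F] N) (hΦ : ∀ u v, Φ (σ u) (σ v) = τ (Φ u v))
    (hm : m ≠ 0) (hσm : σ ^ m = 1) (hζ : ζ ^ m = 1) (j : ℤ) (u v : L) :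
    Φ (piJ σ m ζ j u) (piJ σ m ζ (-j) v) =
      (m : F)⁻¹ • ∑ b ∈ range m, (τ ^ b) (Φ (piJ σ m ζ j u) v) := by
  rw [piJ_apply σ m ζ (-j) v, map_smul, map_sum]
  congr 1
  refine sum_congr rfl fun b _ => ?_
  rw [map_smul, ← map_pow_apply_pow_apply Φ τ hΦ, pow_apply_piJ hm hσm hζ,
    LinearMap.map_smul₂, neg_mul, neg_neg, zpow_mul, zpow_natCast]

theorem map_piJ_eq_of_not_dvd {N : Type*} [AddCommGroup N] [Module F N] (K : L →ₗ[F] N)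
    {ℓ : ℕ} (hℓ : 0 < ℓ) (hℓm : ℓ ∣ m) (j : ℤ) {x : L}
    (hK : ∀ a, ¬ ℓ ∣ a → K ((σ ^ a) x) = 0) :
    K (piJ σ m ζ j x) = (m : F)⁻¹ • K (xbar σ m ℓ ζ j x) := by
  have hrest : ∑ a ∈ range m with ¬ ℓ ∣ a, K (ζ ^ (-(j * a)) • (σ ^ a) x) = 0 :=
    sum_eq_zero fun a ha => by rw [map_smul, hK a (mem_filter.mp ha).2, smul_zero]
  rw [piJ_apply, map_smul, map_sum, ← sum_filter_add_sum_filter_not _ (ℓ ∣ ·), hrest, add_zero,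
    sum_range_filter_dvd hℓ hℓm, xbar, map_sum]
  congr 1
  refine sum_congr rfl fun i _ => ?_
  push_cast
  ring_nf

end Projections

section Weights

variable {F L : Type*} [Field F] [LieRing L] [LieAlgebra F L] {T : LieSubalgebra F L}

theorem lie_mem_gSpace {β γ : L →ₗ[F] F} {u v : L} (hu : u ∈ gSpace F L T β)
    (hv : v ∈ gSpace F L T γ) : ⁅u, v⁆ ∈ gSpace F L T (β + γ) := by
  intro t ht
  rw [leibniz_lie, hu t ht, hv t ht, smul_lie, lie_smul, LinearMap.add_apply, add_smul, add_comm]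

theorem bilin_eq_zero_of_mem_gSpace {B : LinearMap.BilinForm F L}
    (hB : ∀ x y z : L, B ⁅x, y⁆ z = B x ⁅y, z⁆) {β γ : L →ₗ[F] F} {u v t : L}
    (hu : u ∈ gSpace F L T β) (hv : v ∈ gSpace F L T γ) (ht : t ∈ T) (hβγ : β t + γ t ≠ 0) :
    B u v = 0 := by
  have key : B ⁅t, u⁆ v = -B u ⁅t, v⁆ := by rw [← lie_skew, map_neg, LinearMap.neg_apply, hB]
  rw [hu t ht, hv t ht, map_smul, LinearMap.smul_apply, map_smul, smul_eq_mul, smul_eq_mul]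
    at key
  have : (β t + γ t) * B u v = 0 := by linear_combination key
  exact (mul_eq_zero.mp this).resolve_left hβγ

variable {σ : L ≃ₗ[F] L}

theorem pow_apply_lie (hσLie : ∀ x y : L, σ ⁅x, y⁆ = ⁅σ x, σ y⁆) (b : ℕ) (u v : L) :
    (σ ^ b) ⁅u, v⁆ = ⁅(σ ^ b) u, (σ ^ b) v⁆ :=
  (map_pow_apply_pow_apply (LieModule.toEnd F L L : L →ₗ[F] Module.End F L) σ
    (fun x y => (hσLie x y).symm) b u v).symm

theorem pow_apply_mem (hσT : ∀ t ∈ T, σ t ∈ T) (k : ℕ) {t : L} (ht : t ∈ T) :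
    (σ ^ k) t ∈ T := by
  induction k with
  | zero => exact ht
  | succ k ih => rw [pow_succ', LinearEquiv.mul_apply]; exact hσT _ ih

theorem inv_pow_apply_mem {m : ℕ} (hm : 0 < m) (hσm : σ ^ m = 1) (hσT : ∀ t ∈ T, σ t ∈ T)
    (k : ℕ) {t : L} (ht : t ∈ T) : (σ⁻¹ ^ k) t ∈ T := by
  have hinv : σ⁻¹ = σ ^ (m - 1) :=
    (eq_inv_of_mul_eq_one_left (by rw [← pow_succ, Nat.sub_add_cancel hm, hσm])).symm
  rw [hinv, ← pow_mul]
  exact pow_apply_mem hσT _ ht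

theorem pow_apply_mem_gSpace (hσLie : ∀ x y : L, σ ⁅x, y⁆ = ⁅σ x, σ y⁆) {b : ℕ}
    (hinv : ∀ t ∈ T, (σ⁻¹ ^ b) t ∈ T) {β : L →ₗ[F] F} {z : L} (hz : z ∈ gSpace F L T β) :
    (σ ^ b) z ∈ gSpace F L T (β ∘ₗ (σ⁻¹ ^ b : L ≃ₗ[F] L).toLinearMap) := by
  intro t ht
  have hcancel : (σ ^ b) ((σ⁻¹ ^ b) t) = t := by
    rw [inv_pow, ← LinearEquiv.mul_apply, mul_inv_cancel, LinearEquiv.coe_one, id]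
  conv_lhs => rw [← hcancel, ← pow_apply_lie hσLie, hz _ (hinv t ht), map_smul]
  rfl

theorem exists_apply_inv_pow_ne_of_not_dvd (hinv : ∀ k, ∀ t ∈ T, (σ⁻¹ ^ k) t ∈ T)
    {α : L →ₗ[F] F} {ℓ : ℕ} (hℓ : 0 < ℓ) (hℓfix : ∀ t ∈ T, α ((σ⁻¹ ^ ℓ) t) = α t)
    (hℓmin : ∀ k : ℕ, 0 < k → k < ℓ → ∃ t ∈ T, α ((σ⁻¹ ^ k) t) ≠ α t) {c : ℕ}
    (hc : ¬ ℓ ∣ c) : ∃ t ∈ T, α ((σ⁻¹ ^ c) t) ≠ α t := by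
  have hmul : ∀ q, ∀ t ∈ T, α ((σ⁻¹ ^ (ℓ * q)) t) = α t := by
    intro q
    induction q with
    | zero => intro t _; rfl
    | succ q ih =>
      intro t ht
      rw [Nat.mul_succ, pow_add, LinearEquiv.mul_apply, ih _ (hinv ℓ t ht), hℓfix t ht]
  obtain ⟨t, ht, hne⟩ := hℓmin (c % ℓ) (Nat.pos_of_ne_zero fun h => hc (Nat.dvd_of_mod_eq_zero h))
    (Nat.mod_lt c hℓ)
  refine ⟨t, ht, ?_⟩
  rwa [← Nat.div_add_mod c ℓ, pow_add, LinearEquiv.mul_apply, hmul _ _ (hinv _ t ht)]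

theorem exists_mem_forall_apply_inv_pow_ne_zero [Infinite F] (hσT : ∀ t ∈ T, σ t ∈ T)
    {β : L →ₗ[F] F} (hβ : ∃ t ∈ T, β t ≠ 0) (n : ℕ) :
    ∃ t ∈ T, ∀ b < n, β ((σ⁻¹ ^ b) t) ≠ 0 := by
  obtain ⟨t, ht, hβt⟩ := hβ
  obtain ⟨v, hv⟩ := Module.Dual.exists_forall_apply_ne_zero
    (f := fun b : Fin n => β ∘ₗ (σ⁻¹ ^ (b : ℕ) : L ≃ₗ[F] L).toLinearMap ∘ₗ T.toSubmodule.subtype)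
    fun b hb => hβt <| by
      simpa [inv_pow] using LinearMap.congr_fun hb ⟨(σ ^ (b : ℕ)) t, pow_apply_mem hσT _ ht⟩
  exact ⟨v, v.2, fun b hb => hv ⟨b, hb⟩⟩

theorem inv_pow_apply_of_apply_eq {t : L} (ht : σ t = t) (b : ℕ) : (σ⁻¹ ^ b) t = t := by
  induction b with
  | zero => rfl
  | succ b ih =>
    rw [pow_succ', LinearEquiv.mul_apply, ih, LinearEquiv.coe_inv, LinearEquiv.symm_apply_eq, ht]

theorem apply_sum_range_pow {m : ℕ} (hσm : σ ^ m = 1) (z : L) :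
    σ (∑ b ∈ range m, (σ ^ b) z) = ∑ b ∈ range m, (σ ^ b) z := by
  rw [map_sum]
  simp_rw [← LinearEquiv.mul_apply, ← pow_succ']
  exact sum_range_rotate (f := fun b => (σ ^ b) z) (by rw [hσm, pow_zero])

theorem piL_eq_zero_of_mem_gSpace [CharZero F] {m : ℕ} (hm : 0 < m)
    (hσLie : ∀ x y : L, σ ⁅x, y⁆ = ⁅σ x, σ y⁆) (hσm : σ ^ m = 1) (hσT : ∀ t ∈ T, σ t ∈ T)
    (hA4 : A4Cond T σ) {β : L →ₗ[F] F} (hβfix : ∀ t ∈ T, σ t = t → β t = 0)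
    (hβ : ∃ t ∈ T, β t ≠ 0) {z : L} (hz : z ∈ gSpace F L T β) : piL σ m z = 0 := by
  have hzb (b : ℕ) := pow_apply_mem_gSpace hσLie (fun _ => inv_pow_apply_mem hm hσm hσT b) hz
  have hcent : ∀ t ∈ T, ⁅t, ∑ b ∈ range m, (σ ^ b) z⁆ = 0 := by
    refine hA4 _ (apply_sum_range_pow hσm z) fun t ht hσt => ?_
    rw [lie_sum]
    refine sum_eq_zero fun b _ => ?_
    rw [hzb b t ht, LinearMap.comp_apply, LinearEquiv.coe_coe, inv_pow_apply_of_apply_eq hσt,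
      hβfix t ht hσt, zero_smul]
  obtain ⟨t, ht, hβt⟩ := exists_mem_forall_apply_inv_pow_ne_zero hσT hβ m
  rw [piL_apply, (LieModule.toEnd F L L t).sum_eq_zero_of_apply_sum_eq_zero
    (c := fun b => β ((σ⁻¹ ^ b) t)) (fun b hb => hβt b (mem_range.mp hb))
    (fun b _ => hzb b t ht) (hcent t ht), smul_zero]

end Weights

theorem stmt10_general {F L : Type*} [Field F] [CharZero F] [LieRing L] [LieAlgebra F L]
    (T : LieSubalgebra F L)
    (B : LinearMap.BilinForm F L)
    (hIA1 : IsInvForm F L B T)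
    (m : ℕ) (hm : 0 < m) (ζ : F) (hζ : IsPrimitiveRoot ζ m)
    (σ : L ≃ₗ[F] L) (hσLie : ∀ x y : L, σ ⁅x, y⁆ = ⁅σ x, σ y⁆)
    (hσm : σ ^ m = 1) (hσT : ∀ t ∈ T, σ t ∈ T)
    (hσB : ∀ x y : L, B (σ x) (σ y) = B x y)
    (hA4 : A4Cond T σ)
    (α : L →ₗ[F] F)
    (ℓ : ℕ) (hℓpos : 0 < ℓ) (hℓdvd : ℓ ∣ m)
    (hℓfix : ∀ t ∈ T, α ((σ⁻¹ ^ ℓ) t) = α t)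
    (hℓmin : ∀ k : ℕ, 0 < k → k < ℓ → ∃ t ∈ T, α ((σ⁻¹ ^ k) t) ≠ α t)
    (x y : L) (hx : x ∈ gSpace F L T α) (hy : y ∈ gSpace F L T (-α)) (j : ℤ) :
    ⁅piJ σ m ζ j x, piJ σ m ζ (-j) y⁆ =
      (m : F)⁻¹ • piL σ m ⁅xbar σ m ℓ ζ j x, y⁆ ∧
    B (piJ σ m ζ j x) (piJ σ m ζ (-j) y) =
      (m : F)⁻¹ * B (xbar σ m ℓ ζ j x) y := by
  have hinv (k : ℕ) : ∀ t ∈ T, (σ⁻¹ ^ k) t ∈ T := fun _ => inv_pow_apply_mem hm hσm hσT k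
  have hxa (a : ℕ) := pow_apply_mem_gSpace hσLie (hinv a) hx
  have hfix (a : ℕ) : ∀ t ∈ T, σ t = t → α ((σ⁻¹ ^ a) t) + (-α) t = 0 := fun t _ hσt => by
    rw [inv_pow_apply_of_apply_eq hσt, LinearMap.neg_apply, add_neg_cancel]
  have hne (a : ℕ) (ha : ¬ ℓ ∣ a) : ∃ t ∈ T, α ((σ⁻¹ ^ a) t) + (-α) t ≠ 0 := by
    obtain ⟨t, ht, hne⟩ := exists_apply_inv_pow_ne_of_not_dvd hinv hℓpos hℓfix hℓmin ha
    exact ⟨t, ht, by rwa [LinearMap.neg_apply, ← sub_eq_add_neg, sub_ne_zero]⟩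
  constructor
  · calc ⁅piJ σ m ζ j x, piJ σ m ζ (-j) y⁆ = piL σ m ⁅piJ σ m ζ j x, y⁆ := by
          rw [piL_apply]
          exact map_piJ_piJ_neg (LieModule.toEnd F L L : L →ₗ[F] Module.End F L) σ
            (fun u v => (hσLie u v).symm) hm.ne' hσm hζ.pow_eq_one j x y
      _ = (m : F)⁻¹ • piL σ m ⁅xbar σ m ℓ ζ j x, y⁆ :=
          map_piJ_eq_of_not_dvd
            (piL σ m ∘ₗ (LieModule.toEnd F L L : L →ₗ[F] Module.End F L).flip y)
            hℓpos hℓdvd j fun a ha => piL_eq_zero_of_mem_gSpace hm hσLie hσm hσT hA4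
              (hfix a) (hne a ha) (lie_mem_gSpace (hxa a) hy)
  · calc B (piJ σ m ζ j x) (piJ σ m ζ (-j) y) = B (piJ σ m ζ j x) y := by
          rw [map_piJ_piJ_neg B 1 hσB hm.ne' hσm hζ.pow_eq_one]
          simp [hm.ne']
      _ = (m : F)⁻¹ * B (xbar σ m ℓ ζ j x) y :=
          map_piJ_eq_of_not_dvd (B.flip y) hℓpos hℓdvd j fun a ha =>
            have ⟨t, ht, hne⟩ := hne a ha
            bilin_eq_zero_of_mem_gSpace hIA1.inv (hxa a) hy ht hne

/-- `[π_j(x), π_{-j}(y)] = (1/m) π([x̄_j, y])` and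
`(π_j(x), π_{-j}(y)) = (1/m)(x̄_j, y)` for `x ∈ g_α`, `y ∈ g_{-α}`. -/
theorem stmt10 {F L : Type*} [Field F] [CharZero F] [LieRing L] [LieAlgebra F L]
    (T : LieSubalgebra F L) (R : Set (L →ₗ[F] F))
    (B : LinearMap.BilinForm F L)
    (htoral : IsToralPair F L T R) (hIA1 : IsInvForm F L B T)
    (hIA2 : IA2 F L T R)
    (m : ℕ) (hm : 0 < m) (ζ : F) (hζ : IsPrimitiveRoot ζ m)
    (σ : L ≃ₗ[F] L) (hσLie : ∀ x y : L, σ ⁅x, y⁆ = ⁅σ x, σ y⁆)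
    (hσm : σ ^ m = 1) (hσT : ∀ t ∈ T, σ t ∈ T)
    (hσB : ∀ x y : L, B (σ x) (σ y) = B x y)
    (hA4 : A4Cond T σ)
    (α : L →ₗ[F] F) (hα : α ∈ R)
    (ℓ : ℕ) (hℓpos : 0 < ℓ) (hℓdvd : ℓ ∣ m)
    (hℓfix : ∀ t ∈ T, α ((σ⁻¹ ^ ℓ) t) = α t)
    (hℓmin : ∀ k : ℕ, 0 < k → k < ℓ → ∃ t ∈ T, α ((σ⁻¹ ^ k) t) ≠ α t)
    (x y : L) (hx : x ∈ gSpace F L T α) (hy : y ∈ gSpace F L T (-α)) (j : ℤ) :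
    ⁅piJ σ m ζ j x, piJ σ m ζ (-j) y⁆ =
      (m : F)⁻¹ • piL σ m ⁅xbar σ m ℓ ζ j x, y⁆ ∧
    B (piJ σ m ζ j x) (piJ σ m ζ (-j) y) =
      (m : F)⁻¹ * B (xbar σ m ℓ ζ j x) y :=
  stmt10_general T B hIA1 m hm ζ hζ σ hσLie hσm hσT hσB hA4 α ℓ hℓpos hℓdvd hℓfix hℓmin x y hx hy j
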